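/- Let q > 1 and let a be a super-dominant (d+1)-dimensional sequence of length n, and let s, t ∈ {1,...,d} with s < t. Let i_s ≤ i_{s+1} ≤ ... ≤ i_t and j_s ≤ j_{s+1} ≤ ... ≤ j_t be indices in {1,...,n}, and let τ be the ⊢-greatest element of {s, s+1, ..., t} (with ⊢ defined from a). If i_τ ≠ j_τ, then Π_{u=s}^{t} f_a(u, i_u, j_u) > q if i_τ < j_τ, and Π_{u=s}^{t} f_a(u, i_u, j_u) < 1/q if i_τ > j_τ. -/

import Mathlib

/-!
Write `a = b ∘ ψ` with `b` dominant and `ψ i = i(d+1)+d`, so that consecutive positions of `a`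
are more than `d` apart in `b`. Suppose `i_τ < j_τ`. Between `ψ(i_τ)` and `ψ(j_τ)` lie `d`
consecutive unit steps of `b`; give the `u`-th of them to the index `u`. Each step multiplies the
`τ`-th ratio by more than `q`, and the product of the steps for `s ≤ u ≤ t` is at most
`f_a(τ, i_τ, j_τ)`. For `u ≠ τ`, the factor `f_a(u, i_u, j_u)` times the `u`-th step is at least
`1`: this is clear if `i_u ≤ j_u`; otherwise `u ⊢ τ` gives one triple of `a` on which
`q·f(u, ·, ·) < f(τ, ·, ·)`, dominance of `b` propagates this to every triple of `b`, and the
monotonicity of `i` and `j` puts the step on the correct side of `ψ(i_u)` and `ψ(j_u)`.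
Multiplying everything gives a product above `q`. Swapping `i` and `j` inverts every factor,
which gives the case `i_τ > j_τ`.
-/

/-- A `(d+1)`-dimensional sequence is ordered `q`-increasing: every coordinate
sequence is positive and for every `t` the sequence of ratios of the `(t+1)`-st
to the `t`-th coordinate sequence is `q`-increasing. -/
def OrdQInc (q : ℝ) {d n : ℕ} (a : Fin n → Fin (d + 1) → ℝ) : Prop :=
  (∀ i t, 0 < a i t) ∧
  ∀ t : Fin d, ∀ i : Fin n, ∀ h : (i : ℕ) + 1 < n,
    a ⟨(i : ℕ) + 1, h⟩ t.succ / a ⟨(i : ℕ) + 1, h⟩ t.castSucc >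
      q * (a i t.succ / a i t.castSucc)

/-- `fseq a t i j` is the increase `f_a(t,i,j)` of the ratio of the `(t+1)`-st and
`t`-th coordinate sequences from position `i` to position `j`. -/
noncomputable def fseq {d n : ℕ} (a : Fin n → Fin (d + 1) → ℝ) (t : Fin d) (i j : Fin n) : ℝ :=
  (a j t.succ * a i t.castSucc) / (a j t.castSucc * a i t.succ)

/-- `a` is left-dominant: for each pair of distinct `s,t`, the position of
`f_a(t,i,j)/f_a(s,j,k)` relative to the interval `[1/q, q]` is the same for all
triples `i < j < k`. -/
def LeftDominant (q : ℝ) {d n : ℕ} (a : Fin n → Fin (d + 1) → ℝ) : Prop :=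
  ∀ s t : Fin d, s ≠ t →
    (∀ i j k : Fin n, i < j → j < k → fseq a t i j / fseq a s j k < 1 / q) ∨
    (∀ i j k : Fin n, i < j → j < k → fseq a t i j / fseq a s j k ∈ Set.Icc (1 / q) q) ∨
    (∀ i j k : Fin n, i < j → j < k → q < fseq a t i j / fseq a s j k)

/-- `a` is right-dominant: for each pair of distinct `s,t`, the position of
`f_a(t,j,k)/f_a(s,i,j)` relative to the interval `[1/q, q]` is the same for all
triples `i < j < k`. -/
def RightDominant (q : ℝ) {d n : ℕ} (a : Fin n → Fin (d + 1) → ℝ) : Prop :=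
  ∀ s t : Fin d, s ≠ t →
    (∀ i j k : Fin n, i < j → j < k → fseq a t j k / fseq a s i j < 1 / q) ∨
    (∀ i j k : Fin n, i < j → j < k → fseq a t j k / fseq a s i j ∈ Set.Icc (1 / q) q) ∨
    (∀ i j k : Fin n, i < j → j < k → q < fseq a t j k / fseq a s i j)

/-- The relation `t ≺ s`: for all `i < j < k`, `q·f_a(t,j,k) < f_a(s,i,j)` and
`q·f_a(t,i,j) < f_a(s,j,k)`. -/
def Prec (q : ℝ) {d n : ℕ} (a : Fin n → Fin (d + 1) → ℝ) (t s : Fin d) : Prop :=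
  t ≠ s ∧ ∀ i j k : Fin n, i < j → j < k →
    q * fseq a t j k < fseq a s i j ∧ q * fseq a t i j < fseq a s j k

/-- The relation `t ∼_l s` (left similar): for all `i < j < k`,
`f_a(t,i,j) > q·f_a(s,j,k)` and `f_a(s,i,j) > q·f_a(t,j,k)`. -/
def SimL (q : ℝ) {d n : ℕ} (a : Fin n → Fin (d + 1) → ℝ) (t s : Fin d) : Prop :=
  t ≠ s ∧ ∀ i j k : Fin n, i < j → j < k →
    fseq a t i j > q * fseq a s j k ∧ fseq a s i j > q * fseq a t j k

/-- The relation `t ∼_r s` (right similar): for all `i < j < k`,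
`f_a(t,j,k) > q·f_a(s,i,j)` and `f_a(s,j,k) > q·f_a(t,i,j)`. -/
def SimR (q : ℝ) {d n : ℕ} (a : Fin n → Fin (d + 1) → ℝ) (t s : Fin d) : Prop :=
  t ≠ s ∧ ∀ i j k : Fin n, i < j → j < k →
    fseq a t j k > q * fseq a s i j ∧ fseq a s j k > q * fseq a t i j

/-- The relation `t ∼ s`: `t = s`, or `t ∼_l s`, or `t ∼_r s`. -/
def Sim (q : ℝ) {d n : ℕ} (a : Fin n → Fin (d + 1) → ℝ) (t s : Fin d) : Prop :=
  t = s ∨ SimL q a t s ∨ SimR q a t s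

/-- The relation `t ⊢ s`: `t ≺ s`, or (`t ∼_r s` and `t < s`), or
(`t ∼_l s` and `t > s`). -/
def Vdash (q : ℝ) {d n : ℕ} (a : Fin n → Fin (d + 1) → ℝ) (t s : Fin d) : Prop :=
  Prec q a t s ∨ (SimR q a t s ∧ t < s) ∨ (SimL q a t s ∧ s < t)

/-- `a` is super-dominant: there is a dominant (ordered `q`-increasing, left- and
right-dominant) sequence `b` of length `(d+1)n` such that `a i = b (i(d+1))`
(one-indexed), i.e. `a` consists of every `(d+1)`-st element of `b`. -/
def SuperDominant (q : ℝ) {d n : ℕ} (a : Fin n → Fin (d + 1) → ℝ) : Prop :=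
  ∃ b : Fin ((d + 1) * n) → Fin (d + 1) → ℝ,
    (OrdQInc q b ∧ LeftDominant q b ∧ RightDominant q b) ∧
    ∀ i : Fin n, a i = b ⟨(i : ℕ) * (d + 1) + d, by
      have h : (i : ℕ) + 1 ≤ n := i.isLt
      calc (i : ℕ) * (d + 1) + d < ((i : ℕ) + 1) * (d + 1) := by nlinarith
        _ ≤ n * (d + 1) := Nat.mul_le_mul_right _ h
        _ = (d + 1) * n := Nat.mul_comm _ _⟩

open Finset

section FSeq

variable {q : ℝ} {d N : ℕ} {b : Fin N → Fin (d + 1) → ℝ}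

theorem fseq_eq_div (u : Fin d) (x y : Fin N) :
    fseq b u x y = b y u.succ / b y u.castSucc / (b x u.succ / b x u.castSucc) :=
  (div_div_div_eq _ _ _ _).symm

theorem fseq_swap (u : Fin d) (x y : Fin N) : fseq b u y x = (fseq b u x y)⁻¹ := by
  rw [fseq_eq_div, fseq_eq_div, inv_div]

theorem fseq_pos (hpos : ∀ x k, 0 < b x k) (u : Fin d) (x y : Fin N) : 0 < fseq b u x y := by
  rw [fseq_eq_div]
  exact div_pos (div_pos (hpos _ _) (hpos _ _)) (div_pos (hpos _ _) (hpos _ _))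

theorem fseq_self (hpos : ∀ x k, 0 < b x k) (u : Fin d) (x : Fin N) : fseq b u x x = 1 := by
  rw [fseq_eq_div, div_self (div_pos (hpos _ _) (hpos _ _)).ne']

theorem fseq_mul_fseq (hpos : ∀ x k, 0 < b x k) (u : Fin d) (x y z : Fin N) :
    fseq b u x y * fseq b u y z = fseq b u x z := by
  have := hpos y u.succ
  have := hpos y u.castSucc
  simp only [fseq_eq_div]
  field_simp

theorem prod_fseq_Icc_telescope (hpos : ∀ x k, 0 < b x k) (u : Fin d) {m : ℕ}
    (P : Fin (m + 1) → Fin N) {s t : Fin m} (hst : s ≤ t) :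
    ∏ k ∈ Icc s t, fseq b u (P k.castSucc) (P k.succ) = fseq b u (P s.castSucc) (P t.succ) := by
  let r : Fin N → ℝˣ := fun x => Units.mk0 _ (div_pos (hpos x u.succ) (hpos x u.castSucc)).ne'
  simpa [fseq_eq_div, r] using congrArg Units.val (Fin.prod_Icc_div hst (r ∘ P))

theorem OrdQInc.lt_fseq (hq : 1 ≤ q) (hb : OrdQInc q b) (u : Fin d) {x y : Fin N}
    (hxy : x < y) : q < fseq b u x y := by
  obtain ⟨x, hx⟩ := x
  obtain ⟨y, hy⟩ := y
  rw [Fin.mk_lt_mk] at hxy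
  induction y, hxy using Nat.le_induction with
  | base => rw [fseq_eq_div, lt_div_iff₀ (div_pos (hb.1 _ _) (hb.1 _ _))]; exact hb.2 u ⟨x, hx⟩ hy
  | succ y hxy ih =>
    have hstep : q < fseq b u ⟨y, by omega⟩ ⟨y + 1, hy⟩ := by
      rw [fseq_eq_div, lt_div_iff₀ (div_pos (hb.1 _ _) (hb.1 _ _))]; exact hb.2 u ⟨y, _⟩ hy
    rw [← fseq_mul_fseq hb.1 u _ ⟨y, by omega⟩]
    nlinarith [ih (by omega)]

theorem OrdQInc.one_le_fseq (hq : 1 ≤ q) (hb : OrdQInc q b) (u : Fin d) {x y : Fin N}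
    (hxy : x ≤ y) : 1 ≤ fseq b u x y := by
  rcases hxy.lt_or_eq with hxy | rfl
  · exact hq.trans (hb.lt_fseq hq u hxy).le
  · exact (fseq_self hb.1 u x).ge

theorem OrdQInc.fseq_le_fseq (hq : 1 ≤ q) (hb : OrdQInc q b) (u : Fin d) {x x' y y' : Fin N}
    (hx : x' ≤ x) (hy : y ≤ y') :
    fseq b u x y ≤ fseq b u x' y' := by
  rw [← fseq_mul_fseq hb.1 u x' x y', ← fseq_mul_fseq hb.1 u x y y']
  have hxy := fseq_pos hb.1 u x y
  calc fseq b u x y ≤ fseq b u x y * fseq b u y y' :=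
        le_mul_of_one_le_right hxy.le (hb.one_le_fseq hq u hy)
    _ ≤ fseq b u x' x * (fseq b u x y * fseq b u y y') :=
        le_mul_of_one_le_left (mul_pos hxy (fseq_pos hb.1 u y y')).le (hb.one_le_fseq hq u hx)

end FSeq

theorem forall_lt_one_div_of_exists {ι : Type*} [LT ι] {q : ℝ} (hq : 1 ≤ q)
    {r : ι → ι → ι → ℝ}
    (hr : (∀ i j k, i < j → j < k → r i j k < 1 / q) ∨
      (∀ i j k, i < j → j < k → r i j k ∈ Set.Icc (1 / q) q) ∨
      (∀ i j k, i < j → j < k → q < r i j k))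
    {i₀ j₀ k₀ : ι} (h₀₁ : i₀ < j₀) (h₁₂ : j₀ < k₀) (h₀ : r i₀ j₀ k₀ < 1 / q) :
    ∀ i j k, i < j → j < k → r i j k < 1 / q := by
  have hq' : 1 / q ≤ q := (div_le_one₀ (by linarith)).2 hq |>.trans hq
  rcases hr with hr | hr | hr
  · exact hr
  · exact absurd (hr _ _ _ h₀₁ h₁₂).1 (not_le.2 h₀)
  · linarith [hr _ _ _ h₀₁ h₁₂]

theorem mul_lt_iff_div_lt_one_div {q x y : ℝ} (hq : 0 < q) (hy : 0 < y) :
    q * x < y ↔ x / y < 1 / q := by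
  rw [div_lt_div_iff₀ hy hq, one_mul, mul_comm]

section Dominance

variable {q : ℝ} {d N : ℕ} {b : Fin N → Fin (d + 1) → ℝ} {u τ : Fin d}

theorem LeftDominant.mul_fseq_lt (hq : 1 ≤ q) (hpos : ∀ x k, 0 < b x k)
    (hL : LeftDominant q b) (hne : u ≠ τ) {x₀ y₀ z₀ : Fin N} (h₀₁ : x₀ < y₀) (h₁₂ : y₀ < z₀)
    (h₀ : q * fseq b u x₀ y₀ < fseq b τ y₀ z₀) {x y z : Fin N} (hxy : x < y) (hyz : y < z) :
    q * fseq b u x y < fseq b τ y z := by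
  have hq₀ : 0 < q := by linarith
  rw [mul_lt_iff_div_lt_one_div hq₀ (fseq_pos hpos _ _ _)] at h₀ ⊢
  exact forall_lt_one_div_of_exists hq (hL τ u hne.symm) h₀₁ h₁₂ h₀ x y z hxy hyz

theorem RightDominant.mul_fseq_lt (hq : 1 ≤ q) (hpos : ∀ x k, 0 < b x k)
    (hR : RightDominant q b) (hne : u ≠ τ) {x₀ y₀ z₀ : Fin N} (h₀₁ : x₀ < y₀) (h₁₂ : y₀ < z₀)
    (h₀ : q * fseq b u y₀ z₀ < fseq b τ x₀ y₀) {x y z : Fin N} (hxy : x < y) (hyz : y < z) :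
    q * fseq b u y z < fseq b τ x y := by
  have hq₀ : 0 < q := by linarith
  rw [mul_lt_iff_div_lt_one_div hq₀ (fseq_pos hpos _ _ _)] at h₀ ⊢
  exact forall_lt_one_div_of_exists hq (hR τ u hne.symm) h₀₁ h₁₂ h₀ x y z hxy hyz

theorem OrdQInc.one_le_fseq_mul_of_mul_fseq_lt_left (hq : 1 ≤ q) (hb : OrdQInc q b)
    {x y p p' : Fin N} (hyp : y ≤ p) (h : q * fseq b u x p < fseq b τ p p') :
    1 ≤ fseq b u y x * fseq b τ p p' :=
  calc 1 ≤ fseq b u y p := hb.one_le_fseq hq u hyp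
    _ ≤ q * fseq b u y p := le_mul_of_one_le_left (fseq_pos hb.1 _ _ _).le hq
    _ = fseq b u y x * (q * fseq b u x p) := by rw [← fseq_mul_fseq hb.1 u y x p]; ring
    _ ≤ fseq b u y x * fseq b τ p p' := by gcongr; exact (fseq_pos hb.1 _ _ _).le

theorem OrdQInc.one_le_fseq_mul_of_mul_fseq_lt_right (hq : 1 ≤ q) (hb : OrdQInc q b)
    {x y p p' : Fin N} (hp'x : p' ≤ x) (h : q * fseq b u p' y < fseq b τ p p') :
    1 ≤ fseq b u y x * fseq b τ p p' :=
  calc 1 ≤ fseq b u p' x := hb.one_le_fseq hq u hp'x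
    _ ≤ q * fseq b u p' x := le_mul_of_one_le_left (fseq_pos hb.1 _ _ _).le hq
    _ = fseq b u y x * (q * fseq b u p' y) := by rw [← fseq_mul_fseq hb.1 u p' y x]; ring
    _ ≤ fseq b u y x * fseq b τ p p' := by gcongr; exact (fseq_pos hb.1 _ _ _).le

end Dominance

section Vdash

variable {q : ℝ} {d n : ℕ} {a : Fin n → Fin (d + 1) → ℝ} {u τ : Fin d}

theorem Vdash.mul_fseq_lt_of_lt (h : Vdash q a u τ) (huτ : u < τ) {x y z : Fin n}
    (hxy : x < y) (hyz : y < z) : q * fseq a u x y < fseq a τ y z := by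
  rcases h with ⟨-, h⟩ | ⟨⟨-, h⟩, -⟩ | ⟨-, hτu⟩
  · exact (h x y z hxy hyz).2
  · exact (h x y z hxy hyz).2
  · exact absurd huτ hτu.not_gt

theorem Vdash.mul_fseq_lt_of_gt (h : Vdash q a u τ) (hτu : τ < u) {x y z : Fin n}
    (hxy : x < y) (hyz : y < z) : q * fseq a u y z < fseq a τ x y := by
  rcases h with ⟨-, h⟩ | ⟨-, huτ⟩ | ⟨⟨-, h⟩, -⟩
  · exact (h x y z hxy hyz).1
  · exact absurd hτu huτ.not_gt
  · exact (h x y z hxy hyz).2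

end Vdash

theorem lt_prod_of_one_le_mul_of_prod_le {ι : Type*} [DecidableEq ι] {S : Finset ι}
    {f g : ι → ℝ} {q : ℝ} {τ : ι} (hq : 0 ≤ q) (hτ : τ ∈ S) (hfτ : 0 < f τ) (hg : ∀ u ∈ S, 0 < g u)
    (hfg : ∀ u ∈ S.erase τ, 1 ≤ f u * g u) (hgτ : q < g τ) (hprod : ∏ u ∈ S, g u ≤ f τ) :
    q < ∏ u ∈ S, f u := by
  have hgS : 0 < ∏ u ∈ S, g u := prod_pos hg
  have hrest : 1 ≤ ∏ u ∈ S.erase τ, f u * g u := one_le_prod hfg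
  refine lt_of_mul_lt_mul_right ?_ hgS.le
  calc q * ∏ u ∈ S, g u ≤ q * f τ := by gcongr
    _ < f τ * g τ := by rw [mul_comm]; gcongr
    _ ≤ (f τ * g τ) * ∏ u ∈ S.erase τ, f u * g u :=
        le_mul_of_one_le_right (mul_pos hfτ (hq.trans_lt hgτ)).le hrest
    _ = (∏ u ∈ S, f u) * ∏ u ∈ S, g u := by
        rw [mul_prod_erase S (fun u => f u * g u) hτ, prod_mul_distrib]

section Subsequence

variable {q : ℝ} {d n N : ℕ} {b : Fin N → Fin (d + 1) → ℝ} {ψ : Fin n → Fin N}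

theorem one_le_fseq_mul_fseq_of_vdash (hq : 1 ≤ q) (hb : OrdQInc q b) (hL : LeftDominant q b)
    (hR : RightDominant q b) (hψ : StrictMono ψ) {u τ : Fin d} (hV : Vdash q (b ∘ ψ) u τ)
    (hne : u ≠ τ) {iu ju iτ jτ : Fin n} (hτ : iτ < jτ) (hi : u < τ → iu ≤ iτ)
    (hj : τ < u → jτ ≤ ju) {p p' : Fin N} (hpp' : p < p') (hp : ψ iτ ≤ p) (hp' : p' ≤ ψ jτ) :
    1 ≤ fseq b u (ψ iu) (ψ ju) * fseq b τ p p' := by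
  rcases le_or_gt iu ju with hle | hji
  · exact one_le_mul_of_one_le_of_one_le (hb.one_le_fseq hq u (hψ.monotone hle))
      (hq.trans (hb.lt_fseq hq τ hpp').le)
  rcases hne.lt_or_gt with huτ | hτu
  · have hiu := hψ.monotone (hi huτ)
    have h₀ := hV.mul_fseq_lt_of_lt huτ (hji.trans_le (hi huτ)) hτ
    have h := hL.mul_fseq_lt hq hb.1 hne (hψ (hji.trans_le (hi huτ))) (hψ hτ) h₀
      ((hψ hji).trans_le (hiu.trans hp)) hpp'
    exact hb.one_le_fseq_mul_of_mul_fseq_lt_left hq (hiu.trans hp) h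
  · have hju := hψ.monotone (hj hτu)
    have h₀ := hV.mul_fseq_lt_of_gt hτu hτ ((hj hτu).trans_lt hji)
    have h := hR.mul_fseq_lt hq hb.1 hne (hψ hτ) (hψ ((hj hτu).trans_lt hji)) h₀ hpp'
      ((hp'.trans hju).trans_lt (hψ hji))
    exact hb.one_le_fseq_mul_of_mul_fseq_lt_right hq (hp'.trans hju) h

theorem lt_prod_fseq_comp (hq : 1 ≤ q) (hb : OrdQInc q b) (hL : LeftDominant q b)
    (hR : RightDominant q b) (hψ : ∀ x y, x < y → (ψ x : ℕ) + d < ψ y) {s t τ : Fin d}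
    {i j : Fin d → Fin n} (hi : MonotoneOn i (Set.Icc s t)) (hj : MonotoneOn j (Set.Icc s t))
    (hτ : τ ∈ Icc s t) (hτmax : ∀ u ∈ Icc s t, u ≠ τ → Vdash q (b ∘ ψ) u τ)
    (hlt : i τ < j τ) :
    q < ∏ u ∈ Icc s t, fseq (b ∘ ψ) u (i u) (j u) := by
  have hψmono : StrictMono ψ := fun x y h => Fin.lt_def.2 (by have := hψ x y h; omega)
  have hgap := hψ _ _ hlt
  have hN := (ψ (j τ)).isLt
  let P : Fin (d + 1) → Fin N := fun k => ⟨ψ (i τ) + k, by omega⟩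
  have hPstep (k : Fin d) : P k.castSucc < P k.succ := Fin.lt_def.2 (by simp [P])
  have hPlow (k : Fin (d + 1)) : ψ (i τ) ≤ P k := Fin.le_def.2 (by simp [P])
  have hPhigh (k : Fin (d + 1)) : P k ≤ ψ (j τ) := Fin.le_def.2 (by simp [P]; omega)
  obtain ⟨hsτ, hτt⟩ := mem_Icc.1 hτ
  refine lt_prod_of_one_le_mul_of_prod_le (g := fun u => fseq b τ (P u.castSucc) (P u.succ))
    (by linarith) hτ (fseq_pos hb.1 _ _ _) (fun _ _ => fseq_pos hb.1 _ _ _) ?_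
    (hb.lt_fseq hq τ (hPstep τ)) ?_
  · intro u hu
    obtain ⟨hne, hu⟩ := mem_erase.1 hu
    obtain ⟨hsu, hut⟩ := mem_Icc.1 hu
    exact one_le_fseq_mul_fseq_of_vdash hq hb hL hR hψmono (hτmax u hu hne) hne hlt
      (fun h => hi ⟨hsu, hut⟩ ⟨hsτ, hτt⟩ h.le) (fun h => hj ⟨hsτ, hτt⟩ ⟨hsu, hut⟩ h.le)
      (hPstep u) (hPlow _) (hPhigh _)
  · rw [prod_fseq_Icc_telescope hb.1 τ P (hsτ.trans hτt)]
    exact hb.fseq_le_fseq hq τ (hPlow _) (hPhigh _)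

end Subsequence

-- Zero-based form of the paper's position `i(d+1)` in `b`.
def superIndex (d : ℕ) {n : ℕ} (i : Fin n) : Fin ((d + 1) * n) :=
  ⟨i * (d + 1) + d, by nlinarith [i.isLt]⟩

theorem superIndex_add_lt {d n : ℕ} (x y : Fin n) (hxy : x < y) :
    (superIndex d x : ℕ) + d < superIndex d y := by
  have : (x : ℕ) + 1 ≤ y := hxy
  simp only [superIndex]
  nlinarith

theorem crux_corollary_general (q : ℝ) (hq : 1 < q) (d n : ℕ)
    (a : Fin n → Fin (d + 1) → ℝ) (ha : SuperDominant q a)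
    (s t : Fin d)
    (i j : Fin d → Fin n)
    (hmonoi : ∀ u v : Fin d, s ≤ u → u ≤ v → v ≤ t → i u ≤ i v)
    (hmonoj : ∀ u v : Fin d, s ≤ u → u ≤ v → v ≤ t → j u ≤ j v)
    (τ : Fin d) (hτmem : τ ∈ Finset.Icc s t)
    (hτmax : ∀ u ∈ Finset.Icc s t, u ≠ τ → Vdash q a u τ) :
    (i τ < j τ → q < ∏ u ∈ Finset.Icc s t, fseq a u (i u) (j u)) ∧
    (j τ < i τ → ∏ u ∈ Finset.Icc s t, fseq a u (i u) (j u) < 1 / q) := by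
  obtain ⟨b, ⟨hb, hL, hR⟩, hab⟩ := ha
  obtain rfl : a = b ∘ superIndex d := funext hab
  have hi : MonotoneOn i (Set.Icc s t) := fun u hu v hv huv => hmonoi u v hu.1 huv hv.2
  have hj : MonotoneOn j (Set.Icc s t) := fun u hu v hv huv => hmonoj u v hu.1 huv hv.2
  refine ⟨lt_prod_fseq_comp hq.le hb hL hR superIndex_add_lt hi hj hτmem hτmax, fun hgt => ?_⟩
  have hswap := lt_prod_fseq_comp hq.le hb hL hR superIndex_add_lt hj hi hτmem hτmax hgt
  rw [← inv_inv (∏ u ∈ Icc s t, _), ← prod_inv_distrib, inv_eq_one_div]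
  simp only [← fseq_swap]
  exact one_div_lt_one_div_of_lt (by linarith) hswap

/-- Corollary of the key lemma for super-dominant sequences: for `s < t`, monotone
families of indices `i_u, j_u` (`s ≤ u ≤ t`), and `τ` the `⊢`-greatest element of
`{s,...,t}` with `i_τ ≠ j_τ`, the product `Π_{u=s}^t f_a(u, i_u, j_u)` exceeds `q`
if `i_τ < j_τ` and is below `1/q` if `i_τ > j_τ`. -/
theorem crux_corollary (q : ℝ) (hq : 1 < q) (d n : ℕ)
    (a : Fin n → Fin (d + 1) → ℝ) (ha : SuperDominant q a)
    (s t : Fin d) (hst : s < t)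
    (i j : Fin d → Fin n)
    (hmonoi : ∀ u v : Fin d, s ≤ u → u ≤ v → v ≤ t → i u ≤ i v)
    (hmonoj : ∀ u v : Fin d, s ≤ u → u ≤ v → v ≤ t → j u ≤ j v)
    (τ : Fin d) (hτmem : τ ∈ Finset.Icc s t)
    (hτmax : ∀ u ∈ Finset.Icc s t, u ≠ τ → Vdash q a u τ)
    (hij : i τ ≠ j τ) :
    (i τ < j τ → q < ∏ u ∈ Finset.Icc s t, fseq a u (i u) (j u)) ∧
    (j τ < i τ → ∏ u ∈ Finset.Icc s t, fseq a u (i u) (j u) < 1 / q) :=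
  crux_corollary_general q hq d n a ha s t i j hmonoi hmonoj τ hτmem hτmax
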